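/- arXiv:2602.08040 — 2 statements merged into one kernel-verified Lean document; each statement's English description precedes it below -/
import Mathlib

section
/- Let F, F̃ be nonzero matrices of the same shape and m = min(‖F‖_F, ‖F̃‖_F) > 0. Then the normalized Gram matrices satisfy ‖FFᵀ/‖F‖_F² - F̃F̃ᵀ/‖F̃‖_F²‖_F ≤ (4/m)·‖F - F̃‖_F. -/
open Matrix

noncomputable def frobNorm {m n : Type*} [Fintype m] [Fintype n] (A : Matrix m n ℝ) : ℝ :=
  Real.sqrt (∑ i, ∑ j, (A i j) ^ 2)

attribute [local instance] Matrix.frobeniusNormedAddCommGroup Matrix.frobeniusNormedSpace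

lemma frobNorm_eq {m n : Type*} [Fintype m] [Fintype n] (A : Matrix m n ℝ) :
    frobNorm A = ‖A‖ := by
  rw [frobNorm, Matrix.frobenius_norm_def, ← Real.sqrt_eq_rpow]
  congr 1
  refine Finset.sum_congr rfl fun i _ => Finset.sum_congr rfl fun j _ => ?_
  rw [Real.rpow_two, Real.norm_eq_abs, sq_abs]

lemma aux_bound {n d : ℕ} (F F' : Matrix (Fin n) (Fin d) ℝ)
    (hb : 0 < ‖F'‖) (hba : ‖F'‖ ≤ ‖F‖) :
    ‖(‖F‖ ^ 2)⁻¹ • (F * Fᵀ) - (‖F'‖ ^ 2)⁻¹ • (F' * F'ᵀ)‖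
      ≤ (4 / ‖F'‖) * ‖F - F'‖ := by
  set a := ‖F‖ with ha_def
  set b := ‖F'‖ with hb_def
  set D := ‖F - F'‖ with hD_def
  have ha : 0 < a := lt_of_lt_of_le hb hba
  have hD : 0 ≤ D := norm_nonneg _
  have habs : a - b ≤ D := by
    have := abs_norm_sub_norm_le F F'
    have := abs_le.mp this
    exact this.2
  have key : (a ^ 2)⁻¹ • (F * Fᵀ) - (b ^ 2)⁻¹ • (F' * F'ᵀ)
      = (a ^ 2)⁻¹ • (F * Fᵀ - F' * F'ᵀ) + ((a ^ 2)⁻¹ - (b ^ 2)⁻¹) • (F' * F'ᵀ) := by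
    rw [smul_sub, sub_smul]; abel
  have hsplit : F * Fᵀ - F' * F'ᵀ = F * (F - F')ᵀ + (F - F') * F'ᵀ := by
    rw [transpose_sub, Matrix.mul_sub, Matrix.sub_mul]; abel
  have h1 : ‖F * Fᵀ - F' * F'ᵀ‖ ≤ (a + b) * D := by
    rw [hsplit]
    calc ‖F * (F - F')ᵀ + (F - F') * F'ᵀ‖
        ≤ ‖F * (F - F')ᵀ‖ + ‖(F - F') * F'ᵀ‖ := norm_add_le _ _
      _ ≤ ‖F‖ * ‖(F - F')ᵀ‖ + ‖F - F'‖ * ‖F'ᵀ‖ := by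
          gcongr <;> [exact Matrix.frobenius_norm_mul _ _; exact Matrix.frobenius_norm_mul _ _]
      _ = (a + b) * D := by
          rw [Matrix.frobenius_norm_transpose, Matrix.frobenius_norm_transpose]; ring
  have h2 : ‖F' * F'ᵀ‖ ≤ b * b := by
    calc ‖F' * F'ᵀ‖ ≤ ‖F'‖ * ‖F'ᵀ‖ := Matrix.frobenius_norm_mul _ _
      _ = b * b := by rw [Matrix.frobenius_norm_transpose]
  have hinv : |(a ^ 2)⁻¹ - (b ^ 2)⁻¹| = (b ^ 2)⁻¹ - (a ^ 2)⁻¹ := by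
    rw [abs_sub_comm, abs_of_nonneg]
    have : a ^ 2 ≥ b ^ 2 := by nlinarith
    have := inv_anti₀ (by positivity) this
    linarith
  calc ‖(a ^ 2)⁻¹ • (F * Fᵀ) - (b ^ 2)⁻¹ • (F' * F'ᵀ)‖
      = ‖(a ^ 2)⁻¹ • (F * Fᵀ - F' * F'ᵀ) + ((a ^ 2)⁻¹ - (b ^ 2)⁻¹) • (F' * F'ᵀ)‖ := by
        rw [key]
    _ ≤ ‖(a ^ 2)⁻¹ • (F * Fᵀ - F' * F'ᵀ)‖ + ‖((a ^ 2)⁻¹ - (b ^ 2)⁻¹) • (F' * F'ᵀ)‖ :=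
        norm_add_le _ _
    _ = |(a ^ 2)⁻¹| * ‖F * Fᵀ - F' * F'ᵀ‖ + |(a ^ 2)⁻¹ - (b ^ 2)⁻¹| * ‖F' * F'ᵀ‖ := by
        rw [norm_smul, norm_smul, Real.norm_eq_abs, Real.norm_eq_abs]
    _ ≤ (a ^ 2)⁻¹ * ((a + b) * D) + ((b ^ 2)⁻¹ - (a ^ 2)⁻¹) * (b * b) := by
        rw [hinv, abs_of_nonneg (by positivity : (0:ℝ) ≤ (a ^ 2)⁻¹)]
        have hsub : (0:ℝ) ≤ (b ^ 2)⁻¹ - (a ^ 2)⁻¹ := by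
          rw [← hinv]; exact abs_nonneg _
        gcongr
    _ ≤ (4 / b) * D := by
        have ha2 : (0:ℝ) < a ^ 2 := by positivity
        have hb2 : (0:ℝ) < b ^ 2 := by positivity
        have e : (a ^ 2)⁻¹ * ((a + b) * D) + ((b ^ 2)⁻¹ - (a ^ 2)⁻¹) * (b * b)
            = ((a + b) * D + (a ^ 2 - b ^ 2)) / a ^ 2 := by
          field_simp
        rw [e, div_mul_eq_mul_div, div_le_div_iff₀ ha2 hb]
        have c1 : b * (a + b) ≤ 2 * a ^ 2 := by nlinarith
        have c2 := mul_le_mul_of_nonneg_right c1 hD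
        have c3 := mul_le_mul_of_nonneg_left habs
          (mul_nonneg hb.le (by linarith : (0:ℝ) ≤ a + b))
        nlinarith [c2, c3]

/-- Normalized Gram matrices: ‖FFᵀ/‖F‖² - F̃F̃ᵀ/‖F̃‖²‖_F ≤ (4/m)‖F - F̃‖_F. -/
theorem stmt_4 {n d : ℕ} (F F' : Matrix (Fin n) (Fin d) ℝ)
    (hF : 0 < frobNorm F) (hF' : 0 < frobNorm F')
    (m : ℝ) (hm : m = min (frobNorm F) (frobNorm F')) :
    frobNorm ((frobNorm F ^ 2)⁻¹ • (F * Fᵀ) - (frobNorm F' ^ 2)⁻¹ • (F' * F'ᵀ))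
      ≤ (4 / m) * frobNorm (F - F') := by
  simp only [frobNorm_eq] at *
  rcases le_total ‖F'‖ ‖F‖ with h | h
  · rw [hm, min_eq_right h]
    exact aux_bound F F' hF' h
  · rw [hm, min_eq_left h, norm_sub_rev F F', norm_sub_rev]
    exact aux_bound F' F hF h
end

section
/- For L-layer feedforward networks with 1-Lipschitz activations fixing 0, the Frobenius distance between the layer-ℓ outputs of two networks is bounded: ‖H_Θ^ℓ(Z) - H_Θ̃^ℓ(Z)‖_F ≤ ‖Z‖_F · Σ_{j=1}^{ℓ} (∏_{k≠j, k≤ℓ} B_k) · ‖W^j - W̃^j‖_F, where B_k = max(‖W^k‖₂, ‖W̃^k‖₂). -/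
/-!
Write `H, H'` for the layer-`ℓ` outputs of the two networks and split
`H W - H' W' = (H - H') W + H' (W - W')`. An entrywise `1`-Lipschitz activation does not increase
Frobenius distances, `‖X M‖_F ≤ ‖X‖_F ‖M‖₂`, `‖H'‖_F ≤ ‖Z‖_F ∏ B_k` and `‖M‖₂ ≤ ‖M‖_F`, so the
error at layer `ℓ + 1` is at most `B_ℓ` times the error at layer `ℓ` plus
`‖Z‖_F (∏_{k<ℓ} B_k) ‖W_ℓ - W'_ℓ‖_F`; unrolling this recursion gives the sum.
-/

open Matrix

noncomputable def specNorm {m n : Type*} [Fintype m] [Fintype n] [DecidableEq n]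
    (A : Matrix m n ℝ) : ℝ :=
  ‖LinearMap.toContinuousLinearMap (Matrix.toEuclideanLin A)‖

/-- Layer outputs of a feedforward network: H⁰ = Z, H^{ℓ+1} = σ_{ℓ+1}(H^ℓ W^{ℓ+1}),
where `W j` is the weight matrix of layer `j+1` and activations act entrywise. -/
noncomputable def layerOut {nn : ℕ} {d : ℕ → ℕ} (Z : Matrix (Fin nn) (Fin (d 0)) ℝ)
    (W : ∀ j : ℕ, Matrix (Fin (d j)) (Fin (d (j + 1))) ℝ) (σ : ℕ → ℝ → ℝ) :
    (ℓ : ℕ) → Matrix (Fin nn) (Fin (d ℓ)) ℝ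
  | 0 => Z
  | (ℓ + 1) => ((layerOut Z W σ ℓ) * W ℓ).map (σ (ℓ + 1))

open WithLp

section MatrixNorms

variable {m n p : Type*} [Fintype m] [Fintype n] [Fintype p]

lemma frobNorm_nonneg (A : Matrix m n ℝ) : 0 ≤ frobNorm A := Real.sqrt_nonneg _

lemma frobNorm_eq_norm (A : Matrix m n ℝ) :
    frobNorm A = ‖(toLp 2 fun i => toLp 2 (A i) : PiLp 2 fun _ : m => EuclideanSpace ℝ n)‖ := by
  rw [frobNorm, PiLp.norm_eq_of_L2]
  simp only [EuclideanSpace.norm_sq_eq, Real.norm_eq_abs, sq_abs]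

lemma frobNorm_eq_sqrt_sum_rows (A : Matrix m n ℝ) :
    frobNorm A = √(∑ i, ‖(toLp 2 (A i) : EuclideanSpace ℝ n)‖ ^ 2) := by
  simp [frobNorm_eq_norm, PiLp.norm_eq_of_L2]

lemma frobNorm_add_le (A B : Matrix m n ℝ) : frobNorm (A + B) ≤ frobNorm A + frobNorm B := by
  simp only [frobNorm_eq_norm]
  refine (congrArg norm ?_).trans_le (norm_add_le _ _)
  ext i j
  rfl

lemma frobNorm_le_mul_of_rows {A : Matrix m n ℝ} {B : Matrix m p ℝ} {c : ℝ} (hc : 0 ≤ c)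
    (h : ∀ i, ‖(toLp 2 (A i) : EuclideanSpace ℝ n)‖ ≤ c * ‖(toLp 2 (B i) : EuclideanSpace ℝ p)‖) :
    frobNorm A ≤ c * frobNorm B := by
  rw [frobNorm_eq_sqrt_sum_rows, frobNorm_eq_sqrt_sum_rows, ← Real.sqrt_sq hc,
    ← Real.sqrt_mul (sq_nonneg c), Finset.mul_sum]
  gcongr with i
  rw [← mul_pow]
  exact pow_le_pow_left₀ (norm_nonneg _) (h i) 2

lemma frobNorm_map_sub_map_le {f : ℝ → ℝ} (hf : LipschitzWith 1 f) (A B : Matrix m n ℝ) :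
    frobNorm (A.map f - B.map f) ≤ frobNorm (A - B) := by
  refine Real.sqrt_le_sqrt (Finset.sum_le_sum fun i _ => Finset.sum_le_sum fun j _ => ?_)
  simp only [Matrix.sub_apply, map_apply, ← sq_abs (_ - _), ← Real.dist_eq]
  gcongr
  simpa using hf.dist_le_mul (A i j) (B i j)

lemma frobNorm_map_le {f : ℝ → ℝ} (hf : LipschitzWith 1 f) (hf0 : f 0 = 0) (A : Matrix m n ℝ) :
    frobNorm (A.map f) ≤ frobNorm A := by
  simpa [Matrix.map_zero f hf0] using frobNorm_map_sub_map_le hf A 0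

lemma norm_mulVec_le_frobNorm (A : Matrix m n ℝ) (v : n → ℝ) :
    ‖(toLp 2 (A *ᵥ v) : EuclideanSpace ℝ m)‖ ≤ frobNorm A * ‖(toLp 2 v : EuclideanSpace ℝ n)‖ := by
  have hrow (i : m) : |(A *ᵥ v) i| ≤ ‖(toLp 2 (A i) : EuclideanSpace ℝ n)‖ * ‖toLp 2 v‖ := by
    simpa [EuclideanSpace.inner_toLp_toLp, dotProduct_comm, mulVec] using
      abs_real_inner_le_norm (toLp 2 (A i) : EuclideanSpace ℝ n) (toLp 2 v)
  rw [EuclideanSpace.norm_eq, frobNorm_eq_sqrt_sum_rows, ← Real.sqrt_sq (norm_nonneg (toLp 2 v)),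
    ← Real.sqrt_mul (by positivity), Finset.sum_mul]
  gcongr with i
  rw [← mul_pow, PiLp.toLp_apply, Real.norm_eq_abs]
  exact pow_le_pow_left₀ (abs_nonneg _) (hrow i) 2

section

variable [DecidableEq n] [DecidableEq p]

lemma specNorm_nonneg (A : Matrix m n ℝ) : 0 ≤ specNorm A := norm_nonneg _

lemma norm_mulVec_le_specNorm (A : Matrix m n ℝ) (v : n → ℝ) :
    ‖(toLp 2 (A *ᵥ v) : EuclideanSpace ℝ m)‖ ≤ specNorm A * ‖(toLp 2 v : EuclideanSpace ℝ n)‖ :=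
  (LinearMap.toContinuousLinearMap (toEuclideanLin A)).le_opNorm (toLp 2 v)

lemma specNorm_transpose [DecidableEq m] (A : Matrix m n ℝ) : specNorm Aᵀ = specNorm A := by
  open scoped Matrix.Norms.L2Operator in
  exact Matrix.l2_opNorm_conjTranspose A

lemma frobNorm_mul_le (A : Matrix m n ℝ) (M : Matrix n p ℝ) :
    frobNorm (A * M) ≤ frobNorm A * specNorm M := by
  rw [mul_comm]
  refine frobNorm_le_mul_of_rows (specNorm_nonneg M) fun i => ?_
  have : (A * M) i = Mᵀ *ᵥ A i := by
    ext j
    simp [mul_apply, mulVec, dotProduct, mul_comm]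
  rw [this, ← specNorm_transpose M]
  exact norm_mulVec_le_specNorm _ _

lemma specNorm_le_frobNorm (A : Matrix m n ℝ) : specNorm A ≤ frobNorm A :=
  ContinuousLinearMap.opNorm_le_bound _ (frobNorm_nonneg A) fun x =>
    norm_mulVec_le_frobNorm A (ofLp x)

end

end MatrixNorms

open Finset in
lemma sum_prod_erase_range_succ {R : Type*} [CommSemiring R] (b c : ℕ → R) (ℓ : ℕ) :
    ∑ j ∈ range (ℓ + 1), (∏ k ∈ (range (ℓ + 1)).erase j, b k) * c j
      = b ℓ * ∑ j ∈ range ℓ, (∏ k ∈ (range ℓ).erase j, b k) * c j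
        + (∏ k ∈ range ℓ, b k) * c ℓ := by
  rw [sum_range_succ, range_add_one, erase_insert notMem_range_self, mul_sum]
  congr 1
  refine sum_congr rfl fun j hj => ?_
  rw [erase_insert_of_ne (ne_of_mem_of_not_mem hj notMem_range_self).symm,
    prod_insert fun h => notMem_range_self (mem_of_mem_erase h), mul_assoc]

section Network

variable {nn : ℕ} {d : ℕ → ℕ} (Z : Matrix (Fin nn) (Fin (d 0)) ℝ)
  {W W' : ∀ j : ℕ, Matrix (Fin (d j)) (Fin (d (j + 1))) ℝ} {σ : ℕ → ℝ → ℝ} {B : ℕ → ℝ}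

lemma frobNorm_layerOut_le (hσ : ∀ j, LipschitzWith 1 (σ j)) (hσ0 : ∀ j, σ j 0 = 0)
    (hW : ∀ k, specNorm (W k) ≤ B k) (ℓ : ℕ) :
    frobNorm (layerOut Z W σ ℓ) ≤ frobNorm Z * ∏ k ∈ Finset.range ℓ, B k := by
  induction ℓ with
  | zero => simp [layerOut]
  | succ ℓ ih =>
    calc frobNorm (layerOut Z W σ (ℓ + 1))
        ≤ frobNorm (layerOut Z W σ ℓ) * specNorm (W ℓ) :=
          (frobNorm_map_le (hσ _) (hσ0 _) _).trans (frobNorm_mul_le _ _)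
      _ ≤ (frobNorm Z * ∏ k ∈ Finset.range ℓ, B k) * B ℓ :=
          mul_le_mul ih (hW ℓ) (specNorm_nonneg _) ((frobNorm_nonneg _).trans ih)
      _ = frobNorm Z * ∏ k ∈ Finset.range (ℓ + 1), B k := by
          rw [Finset.prod_range_succ, mul_assoc]

lemma frobNorm_layerOut_sub_le (hσ : ∀ j, LipschitzWith 1 (σ j)) (hσ0 : ∀ j, σ j 0 = 0)
    (hW : ∀ k, specNorm (W k) ≤ B k) (hW' : ∀ k, specNorm (W' k) ≤ B k) (ℓ : ℕ) :
    frobNorm (layerOut Z W σ ℓ - layerOut Z W' σ ℓ)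
      ≤ frobNorm Z * ∑ j ∈ Finset.range ℓ,
          (∏ k ∈ (Finset.range ℓ).erase j, B k) * frobNorm (W j - W' j) := by
  induction ℓ with
  | zero => simp [layerOut, frobNorm]
  | succ ℓ ih =>
    set H := layerOut Z W σ ℓ
    set H' := layerOut Z W' σ ℓ
    have hsplit : H * W ℓ - H' * W' ℓ = (H - H') * W ℓ + H' * (W ℓ - W' ℓ) := by
      rw [Matrix.sub_mul, Matrix.mul_sub]; abel
    calc frobNorm (layerOut Z W σ (ℓ + 1) - layerOut Z W' σ (ℓ + 1))
        ≤ frobNorm (H * W ℓ - H' * W' ℓ) := frobNorm_map_sub_map_le (hσ _) _ _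
      _ ≤ frobNorm (H - H') * specNorm (W ℓ) + frobNorm H' * specNorm (W ℓ - W' ℓ) := by
          rw [hsplit]
          exact (frobNorm_add_le _ _).trans (add_le_add (frobNorm_mul_le _ _) (frobNorm_mul_le _ _))
      _ ≤ (frobNorm Z * ∑ j ∈ Finset.range ℓ,
              (∏ k ∈ (Finset.range ℓ).erase j, B k) * frobNorm (W j - W' j)) * B ℓ
            + (frobNorm Z * ∏ k ∈ Finset.range ℓ, B k) * frobNorm (W ℓ - W' ℓ) := by
          have hH' := frobNorm_layerOut_le Z hσ hσ0 hW' ℓ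
          exact add_le_add (mul_le_mul ih (hW ℓ) (specNorm_nonneg _) ((frobNorm_nonneg _).trans ih))
            (mul_le_mul hH' (specNorm_le_frobNorm _) (specNorm_nonneg _)
              ((frobNorm_nonneg _).trans hH'))
      _ = _ := by rw [sum_prod_erase_range_succ]; ring

end Network

/-- Telescoping bound for L-layer feedforward networks with 1-Lipschitz activations
fixing 0: ‖H_Θ^ℓ(Z) - H_Θ̃^ℓ(Z)‖_F ≤ ‖Z‖_F · Σ_j (∏_{k≠j,k≤ℓ} B_k)·‖W^j - W̃^j‖_F,
where B_k = max(‖W^k‖₂, ‖W̃^k‖₂). -/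
theorem stmt_6 {nn : ℕ} {d : ℕ → ℕ} (Z : Matrix (Fin nn) (Fin (d 0)) ℝ)
    (W W' : ∀ j : ℕ, Matrix (Fin (d j)) (Fin (d (j + 1))) ℝ)
    (σ : ℕ → ℝ → ℝ) (hσ : ∀ j, LipschitzWith 1 (σ j)) (hσ0 : ∀ j, σ j 0 = 0)
    (B : ℕ → ℝ) (hB : ∀ k, B k = max (specNorm (W k)) (specNorm (W' k))) :
    ∀ ℓ : ℕ,
      frobNorm (layerOut Z W σ ℓ - layerOut Z W' σ ℓ)
        ≤ frobNorm Z *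
            ∑ j ∈ Finset.range ℓ,
              (∏ k ∈ (Finset.range ℓ).erase j, B k) * frobNorm (W j - W' j) :=
  frobNorm_layerOut_sub_le Z hσ hσ0 (fun k => (hB k).symm ▸ le_max_left _ _)
    (fun k => (hB k).symm ▸ le_max_right _ _)
end
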